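/- (Theorem: stability of the extinction equilibrium, stated via the linearization.) Let n ≥ 1, let A be an n×n real sub-generator matrix all of whose complex eigenvalues have negative real part, α ∈ ℝⁿ a probability vector, μ, γ_V, γ_R, ρ_J, μ_J > 0, and φ_J, φ_V ≥ 0 with φ_J < ρ_J + μ_J. Define M as the block matrix on {J} ⊕ {1,…,n} ⊕ {V} ⊕ {R} with block rows [φ_J−(ρ_J+μ_J), 0, φ_V, 0], [ρ_J·α, Aᵀ−μI, 0, γ_R·α], [0, ((−A)𝟙)ᵀ, −(μ+γ_V), 0], [0, 0, γ_V, −(μ+γ_R)] (the Jacobian of the mosquito demographic model at the extinction equilibrium). Then every complex eigenvalue of M has negative real part if and only if N₀ < 1, where N₀ = (ρ_J/((ρ_J+μ_J)−φ_J)) · (φ_V/(μ+γ_V)) · τ · n_G is the basic offspring number. -/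

import Mathlib

/-!
Write `τ(ν) = αᵀ (νI - A)⁻¹ (-A)𝟙` and `W = ρJ φV / (ρJ + μJ - φJ) + γR γV / (μ + γR)`. Since
`A` is a sub-generator, `(νI - A) y ≥ 0` forces `y ≥ 0` when `ν > 0` (look at a minimal entry of
`y`). This gives `τ(ν) ≤ 1`, which turns `N₀ < 1` into `τ(μ) W < μ + γV`. Everything else is read
off real row vectors `y` for the Metzler matrix `M`.

If `τ(μ) W < μ + γV`, a small perturbation of the solution of the `J`, `B` and `R` columns of
`y M = 0` gives `y > 0` with `y M < 0`, and a weighted Gershgorin estimate puts the spectrum of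
`M` in the open left half-plane. Otherwise
`s ↦ τ(s + μ) (ρJ φV / (s + ρJ + μJ - φJ) + γR γV / (s + μ + γR)) - (s + μ + γV)` is nonnegative
at `0` and negative at `W`, so it has a root `s ≥ 0`, and solving `y M = s y` column by column
exhibits `s` as an eigenvalue of `M`.
-/

open Matrix

/-- Index set of the demographic model: juveniles `J`, biting stages `B₁,…,Bₙ`,
ovipositing `V`, resting `R`. -/
abbrev DemogIdx (n : ℕ) := Fin 1 ⊕ (Fin n ⊕ (Fin 1 ⊕ Fin 1))

/-- The Jacobian `M` of the mosquito demographic model at the extinction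
equilibrium, with block rows `[φ_J−(ρ_J+μ_J), 0, φ_V, 0]`,
`[ρ_J α, Aᵀ−μI, 0, γ_R α]`, `[0, ((−A)𝟙)ᵀ, −(μ+γ_V), 0]`, `[0, 0, γ_V, −(μ+γ_R)]`. -/
def Mmat {n : ℕ} (A : Matrix (Fin n) (Fin n) ℝ) (α : Fin n → ℝ)
    (μ γV γR ρJ μJ φJ φV : ℝ) : Matrix (DemogIdx n) (DemogIdx n) ℝ :=
  Matrix.of fun i j =>
    match i, j with
    | Sum.inl _, Sum.inl _ => φJ - (ρJ + μJ)
    | Sum.inl _, Sum.inr (Sum.inr (Sum.inl _)) => φV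
    | Sum.inr (Sum.inl k), Sum.inl _ => ρJ * α k
    | Sum.inr (Sum.inl k), Sum.inr (Sum.inl l) =>
        (Aᵀ - μ • (1 : Matrix (Fin n) (Fin n) ℝ)) k l
    | Sum.inr (Sum.inl k), Sum.inr (Sum.inr (Sum.inr _)) => γR * α k
    | Sum.inr (Sum.inr (Sum.inl _)), Sum.inr (Sum.inl l) => ((-A) *ᵥ (1 : Fin n → ℝ)) l
    | Sum.inr (Sum.inr (Sum.inl _)), Sum.inr (Sum.inr (Sum.inl _)) => -(μ + γV)
    | Sum.inr (Sum.inr (Sum.inr _)), Sum.inr (Sum.inr (Sum.inl _)) => γV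
    | Sum.inr (Sum.inr (Sum.inr _)), Sum.inr (Sum.inr (Sum.inr _)) => -(μ + γR)
    | _, _ => 0

/-- The survival-and-exit probability `τ = αᵀ (μI − A)⁻¹ ((−A)𝟙)`. -/
noncomputable def tau {n : ℕ} (A : Matrix (Fin n) (Fin n) ℝ) (α : Fin n → ℝ) (μ : ℝ) : ℝ :=
  α ⬝ᵥ ((μ • (1 : Matrix (Fin n) (Fin n) ℝ) - A)⁻¹ *ᵥ ((-A) *ᵥ (1 : Fin n → ℝ)))

/-- The average number of gonotrophic cycles `n_G`. -/
noncomputable def nG {n : ℕ} (A : Matrix (Fin n) (Fin n) ℝ) (α : Fin n → ℝ)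
    (μ γV γR : ℝ) : ℝ :=
  (1 - tau A α μ * (γR / (μ + γR)) * (γV / (μ + γV)))⁻¹

namespace Matrix

def IsMetzler {ι R : Type*} [Zero R] [LE R] (M : Matrix ι ι R) : Prop :=
  ∀ i j, i ≠ j → 0 ≤ M i j

variable {ι : Type*} [Fintype ι]

section Spectrum

variable [DecidableEq ι]

theorem mem_spectrum_iff_exists_vecMul_eq_smul {K : Type*} [Field K] {N : Matrix ι ι K} {z : K} :
    z ∈ spectrum K N ↔ ∃ v ≠ 0, v ᵥ* N = z • v := by
  rw [spectrum.mem_iff, Algebra.algebraMap_eq_smul_one, isUnit_iff_isUnit_det, isUnit_iff_ne_zero,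
    not_not, ← exists_vecMul_eq_zero_iff]
  simp only [vecMul_sub, vecMul_smul, vecMul_one, sub_eq_zero, eq_comm]

theorem ofReal_mem_spectrum_map_of_vecMul_eq_smul {M : Matrix ι ι ℝ} {s : ℝ} {v : ι → ℝ}
    (hv : v ≠ 0) (h : v ᵥ* M = s • v) : (s : ℂ) ∈ spectrum ℂ (M.map (Complex.ofReal ·)) := by
  refine mem_spectrum_iff_exists_vecMul_eq_smul.2 ⟨Complex.ofReal ∘ v, ?_, ?_⟩
  · exact fun h0 => hv (funext fun i => Complex.ofReal_injective (congrFun h0 i))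
  · ext i
    have hi : ((v ᵥ* M) i : ℂ) = (s : ℂ) * v i := by rw [h]; simp
    simpa [vecMul, dotProduct] using hi

/-- Gershgorin's estimate for a left eigenvector `v`, taken in the column where `‖v j‖ / x j` is
maximal. -/
theorem IsMetzler.re_lt_zero_of_vecMul_neg {M : Matrix ι ι ℝ} (hM : M.IsMetzler) {x : ι → ℝ}
    (hx : ∀ i, 0 < x i) (hxM : ∀ j, (x ᵥ* M) j < 0) {z : ℂ}
    (hz : z ∈ spectrum ℂ (M.map (Complex.ofReal ·))) : z.re < 0 := by
  obtain ⟨v, hv, hvM⟩ := mem_spectrum_iff_exists_vecMul_eq_smul.1 hz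
  obtain ⟨k, hk⟩ := Function.ne_iff.1 hv
  obtain ⟨j, -, hj⟩ :=
    Finset.exists_max_image Finset.univ (fun i => ‖v i‖ / x i) ⟨k, Finset.mem_univ k⟩
  set r := ‖v j‖ / x j
  have hr : 0 < r := (div_pos (norm_pos_iff.2 hk) (hx k)).trans_le (hj k (Finset.mem_univ k))
  have hvx : ∀ i, ‖v i‖ ≤ r * x i := fun i =>
    (div_le_iff₀ (hx i)).1 (hj i (Finset.mem_univ i))
  have hvj : ‖v j‖ = r * x j := (div_mul_cancel₀ _ (hx j).ne').symm
  have hcol : (z - M j j) * v j = ∑ i ∈ Finset.univ.erase j, v i * M i j := by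
    have := congrFun hvM j
    simp only [vecMul, dotProduct, map_apply, Pi.smul_apply, smul_eq_mul] at this
    rw [Finset.sum_erase_eq_sub (Finset.mem_univ j), this]
    ring
  have hbound : ‖z - M j j‖ * (r * x j) ≤ r * ∑ i ∈ Finset.univ.erase j, x i * M i j := by
    rw [← hvj, ← norm_mul, hcol, Finset.mul_sum]
    refine (norm_sum_le _ _).trans (Finset.sum_le_sum fun i hi => ?_)
    have hMij : 0 ≤ M i j := hM i j (Finset.ne_of_mem_erase hi)
    rw [norm_mul, Complex.norm_real, Real.norm_of_nonneg hMij, ← mul_assoc]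
    exact mul_le_mul_of_nonneg_right (hvx i) hMij
  have hxMj : M j j * x j + ∑ i ∈ Finset.univ.erase j, x i * M i j < 0 := by
    have := hxM j
    rwa [vecMul, dotProduct, ← Finset.add_sum_erase _ _ (Finset.mem_univ j), mul_comm] at this
  have hre : (z.re - M j j) * x j ≤ ‖z - M j j‖ * x j :=
    mul_le_mul_of_nonneg_right (by simpa using Complex.re_le_norm (z - M j j)) (hx j).le
  have hnorm : ‖z - M j j‖ * x j ≤ ∑ i ∈ Finset.univ.erase j, x i * M i j :=
    le_of_mul_le_mul_left (by linarith) hr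
  have : z.re * x j < 0 := by linarith
  exact neg_of_mul_neg_left this (hx j).le

end Spectrum

section MinimumPrinciple

variable {𝕜 : Type*} [Field 𝕜] [LinearOrder 𝕜] [IsStrictOrderedRing 𝕜] {A : Matrix ι ι 𝕜} {ν : 𝕜}

theorem neg_mulVec_one_nonneg (hrow : ∀ i, ∑ j, A i j ≤ 0) : 0 ≤ (-A) *ᵥ 1 := fun i => by
  simpa [neg_mulVec, mulVec, dotProduct] using hrow i

variable [DecidableEq ι]

theorem IsMetzler.smul_one_sub_mulVec_apply_le_of_isMin (hA : A.IsMetzler)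
    (hrow : ∀ i, ∑ j, A i j ≤ 0) {y : ι → 𝕜} {i : ι} (hmin : ∀ j, y i ≤ y j) (hyi : y i ≤ 0) :
    ((ν • 1 - A) *ᵥ y) i ≤ ν * y i := by
  have hsum : (∑ j, A i j) * y i ≤ ∑ j, A i j * y j := by
    rw [Finset.sum_mul]
    refine Finset.sum_le_sum fun j _ => ?_
    rcases eq_or_ne i j with rfl | hij
    · exact le_rfl
    · exact mul_le_mul_of_nonneg_left (hmin j) (hA i j hij)
  have hrow_mul : 0 ≤ (∑ j, A i j) * y i := mul_nonneg_of_nonpos_of_nonpos (hrow i) hyi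
  have hPy : ((ν • 1 - A) *ᵥ y) i = ν * y i - ∑ j, A i j * y j := by
    rw [sub_mulVec, smul_mulVec, one_mulVec, Pi.sub_apply, Pi.smul_apply, smul_eq_mul]; rfl
  linarith

theorem IsMetzler.nonneg_of_smul_one_sub_mulVec_nonneg (hA : A.IsMetzler)
    (hrow : ∀ i, ∑ j, A i j ≤ 0) (hν : 0 < ν) {y : ι → 𝕜}
    (hy : 0 ≤ (ν • 1 - A) *ᵥ y) : 0 ≤ y := fun k => by
  change (0 : 𝕜) ≤ y k
  obtain ⟨i, hi⟩ := (haveI : Nonempty ι := ⟨k⟩; Finite.exists_min y)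
  refine le_trans ?_ (hi k)
  by_contra! hyi
  have := hA.smul_one_sub_mulVec_apply_le_of_isMin hrow (ν := ν) hi hyi.le
  linarith [show (0 : 𝕜) ≤ _ from hy i, mul_neg_of_pos_of_neg hν hyi]

theorem IsMetzler.pos_of_smul_one_sub_mulVec_pos (hA : A.IsMetzler)
    (hrow : ∀ i, ∑ j, A i j ≤ 0) (hν : 0 ≤ ν) {y : ι → 𝕜}
    (hy : ∀ i, 0 < ((ν • 1 - A) *ᵥ y) i) (k : ι) : 0 < y k := by
  obtain ⟨i, hi⟩ := (haveI : Nonempty ι := ⟨k⟩; Finite.exists_min y)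
  refine lt_of_lt_of_le ?_ (hi k)
  by_contra! hyi
  have := hA.smul_one_sub_mulVec_apply_le_of_isMin hrow (ν := ν) hi hyi
  linarith [hy i, mul_nonpos_of_nonneg_of_nonpos hν hyi]

theorem IsMetzler.det_smul_one_sub_ne_zero (hA : A.IsMetzler) (hrow : ∀ i, ∑ j, A i j ≤ 0)
    (hν : 0 < ν) : (ν • 1 - A).det ≠ 0 := by
  intro hdet
  obtain ⟨v, hv, hPv⟩ := exists_mulVec_eq_zero_iff.2 hdet
  have hnonneg := hA.nonneg_of_smul_one_sub_mulVec_nonneg hrow hν (y := v) (by simp [hPv])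
  have hnonpos := hA.nonneg_of_smul_one_sub_mulVec_nonneg hrow hν (y := -v)
    (by simp [mulVec_neg, hPv])
  exact hv (le_antisymm (neg_nonneg.1 hnonpos) hnonneg)

theorem IsMetzler.smul_one_sub_mulVec_inv_mulVec (hA : A.IsMetzler)
    (hrow : ∀ i, ∑ j, A i j ≤ 0) (hν : 0 < ν) (v : ι → 𝕜) :
    (ν • 1 - A) *ᵥ ((ν • 1 - A)⁻¹ *ᵥ v) = v := by
  rw [mulVec_mulVec, mul_nonsing_inv _ (isUnit_iff_ne_zero.2 (hA.det_smul_one_sub_ne_zero hrow hν)),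
    one_mulVec]

theorem IsMetzler.inv_mulVec_pos (hA : A.IsMetzler) (hrow : ∀ i, ∑ j, A i j ≤ 0)
    (hν : 0 < ν) {v : ι → 𝕜} (hv : ∀ i, 0 < v i) (k : ι) : 0 < ((ν • 1 - A)⁻¹ *ᵥ v) k :=
  hA.pos_of_smul_one_sub_mulVec_pos hrow hν.le
    (by rwa [hA.smul_one_sub_mulVec_inv_mulVec hrow hν]) k

end MinimumPrinciple

end Matrix

section Tau

variable {n : ℕ} {A : Matrix (Fin n) (Fin n) ℝ} {α : Fin n → ℝ} {ν : ℝ}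

theorem tau_le_one (hA : A.IsMetzler) (hrow : ∀ i, ∑ j, A i j ≤ 0) (hα0 : 0 ≤ α)
    (hα1 : ∑ i, α i = 1) (hν : 0 < ν) : tau A α ν ≤ 1 := by
  have hKb : (ν • 1 - A)⁻¹ *ᵥ ((-A) *ᵥ 1) ≤ 1 := by
    refine sub_nonneg.1 (hA.nonneg_of_smul_one_sub_mulVec_nonneg hrow hν ?_)
    rw [mulVec_sub, hA.smul_one_sub_mulVec_inv_mulVec hrow hν]
    intro i
    simp [sub_mulVec, neg_mulVec, smul_mulVec, hν.le]
  calc tau A α ν ≤ α ⬝ᵥ 1 := dotProduct_le_dotProduct_of_nonneg_left hKb hα0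
    _ = 1 := by rw [dotProduct_one, hα1]

theorem continuousAt_tau (h : (ν • 1 - A).det ≠ 0) : ContinuousAt (tau A α) ν := by
  have hinv : ContinuousAt Inv.inv (ν • (1 : Matrix (Fin n) (Fin n) ℝ) - A) :=
    continuousAt_matrix_inv _ (by rw [Ring.inverse_eq_inv']; exact continuousAt_inv₀ h)
  have hlin : Continuous fun K : Matrix (Fin n) (Fin n) ℝ => α ⬝ᵥ (K *ᵥ ((-A) *ᵥ 1)) := by
    fun_prop
  exact (hlin.continuousAt.comp hinv).comp
    (f := fun ν : ℝ => ν • (1 : Matrix (Fin n) (Fin n) ℝ) - A) (by fun_prop)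

end Tau

section Model

variable {n : ℕ} {A : Matrix (Fin n) (Fin n) ℝ} {α : Fin n → ℝ} {μ γV γR ρJ μJ φJ φV : ℝ}

def demogVec (yJ : ℝ) (yB : Fin n → ℝ) (yV yR : ℝ) : DemogIdx n → ℝ :=
  Sum.elim (fun _ => yJ) (Sum.elim yB (Sum.elim (fun _ => yV) (fun _ => yR)))

theorem demogVec_vecMul_Mmat (yJ : ℝ) (yB : Fin n → ℝ) (yV yR : ℝ) :
    demogVec yJ yB yV yR ᵥ* Mmat A α μ γV γR ρJ μJ φJ φV =
      demogVec ((φJ - (ρJ + μJ)) * yJ + ρJ * (α ⬝ᵥ yB))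
        ((A - μ • 1) *ᵥ yB + yV • ((-A) *ᵥ 1))
        (φV * yJ - (μ + γV) * yV + γV * yR)
        (γR * (α ⬝ᵥ yB) - (μ + γR) * yR) := by
  ext (_ | k | _ | _) <;>
    simp [demogVec, Mmat, vecMul, mulVec, dotProduct, Fintype.sum_sum_type, Finset.mul_sum,
      mul_sub, one_apply, mul_comm, mul_left_comm] <;> ring

theorem Mmat_isMetzler (hA : A.IsMetzler) (hrow : ∀ i, ∑ j, A i j ≤ 0) (hα0 : 0 ≤ α)
    (hρJ : 0 ≤ ρJ) (hφV : 0 ≤ φV) (hγV : 0 ≤ γV) (hγR : 0 ≤ γR) :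
    (Mmat A α μ γV γR ρJ μJ φJ φV).IsMetzler := by
  rintro (i | k | i | i) (j | l | j | j) hij <;>
    simp [Mmat, Fin.fin_one_eq_zero, one_apply] at hij ⊢
  exacts [hφV, mul_nonneg hρJ (hα0 k), by simpa [hij] using hA l k (Ne.symm hij),
    mul_nonneg hγR (hα0 k), neg_mulVec_one_nonneg hrow l, hγV]

theorem exists_pos_vecMul_Mmat_neg (hA : A.IsMetzler) (hrow : ∀ i, ∑ j, A i j ≤ 0) (hα0 : 0 ≤ α)
    (hμ : 0 < μ) (ha : 0 < ρJ + μJ - φJ) (hρJ : 0 ≤ ρJ) (hγR : 0 ≤ γR)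
    (h : tau A α μ * (ρJ * φV / (ρJ + μJ - φJ) + γR * γV / (μ + γR)) < μ + γV) :
    ∃ y, (∀ i, 0 < y i) ∧ ∀ j, (y ᵥ* Mmat A α μ γV γR ρJ μJ φJ φV) j < 0 := by
  -- `y` solves the `J`, `B`, `R` columns of `y M = 0` up to a slack `ε`, which leaves
  -- `τ W - (μ + γV) + O(ε)` in the `V` column.
  have hd : 0 < μ + γR := by linarith
  set a := ρJ + μJ - φJ
  set W := ρJ * φV / a + γR * γV / (μ + γR)
  set κ := α ⬝ᵥ ((μ • 1 - A)⁻¹ *ᵥ 1)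
  obtain ⟨ε, hε, hεW⟩ := exists_pos_mul_lt (sub_pos.2 h) (κ * W + φV + γV)
  set yB := (μ • 1 - A)⁻¹ *ᵥ ((-A) *ᵥ 1 + ε • 1)
  have hPyB : (μ • 1 - A) *ᵥ yB = (-A) *ᵥ 1 + ε • 1 := hA.smul_one_sub_mulVec_inv_mulVec hrow hμ _
  have hyB : ∀ k, 0 < yB k := hA.inv_mulVec_pos hrow hμ fun k => by
    simpa using add_pos_of_nonneg_of_pos (neg_mulVec_one_nonneg hrow k) hε
  set t := α ⬝ᵥ yB
  have ht : t = tau A α μ + ε * κ := by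
    simp only [t, yB, κ, tau, mulVec_add, mulVec_smul, dotProduct_add, dotProduct_smul, smul_eq_mul]
  have ht0 : 0 ≤ t := dotProduct_nonneg_of_nonneg hα0 fun k => (hyB k).le
  refine ⟨demogVec (ρJ * t / a + ε) yB 1 (γR * t / (μ + γR) + ε), ?_, ?_⟩
  · rintro (_ | k | _ | _)
    · exact add_pos_of_nonneg_of_pos (by positivity) hε
    · exact hyB k
    · exact one_pos
    · exact add_pos_of_nonneg_of_pos (by positivity) hε
  rw [demogVec_vecMul_Mmat]
  rintro (_ | k | _ | _) <;> simp only [demogVec, Sum.elim_inl, Sum.elim_inr]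
  · have : (φJ - (ρJ + μJ)) * (ρJ * t / a + ε) + ρJ * t = -(a * ε) := by
      rw [show φJ - (ρJ + μJ) = -a by ring]; field_simp; ring
    linarith [mul_pos ha hε]
  · have hAμ : (A - μ • 1) *ᵥ yB = -((μ • 1 - A) *ᵥ yB) := by rw [← neg_mulVec, neg_sub]
    simp [hAμ, hPyB, hε]
  · have : φV * (ρJ * t / a + ε) - (μ + γV) * 1 + γV * (γR * t / (μ + γR) + ε)
        = (tau A α μ * W - (μ + γV)) + (κ * W + φV + γV) * ε := by
      rw [ht]; simp only [W]; ring
    linarith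
  · have : γR * t - (μ + γR) * (γR * t / (μ + γR) + ε) = -((μ + γR) * ε) := by
      field_simp; ring
    linarith [mul_pos hd hε]

theorem ofReal_mem_spectrum_Mmat_of_char_eq (hA : A.IsMetzler) (hrow : ∀ i, ∑ j, A i j ≤ 0)
    {s : ℝ} (hsμ : 0 < s + μ) (hsa : s + (ρJ + μJ - φJ) ≠ 0) (hsd : s + (μ + γR) ≠ 0)
    (hchar : tau A α (s + μ) * (ρJ * φV / (s + (ρJ + μJ - φJ)) + γR * γV / (s + (μ + γR)))
      = s + (μ + γV)) :
    (s : ℂ) ∈ spectrum ℂ ((Mmat A α μ γV γR ρJ μJ φJ φV).map (Complex.ofReal ·)) := by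
  set yB := ((s + μ) • 1 - A)⁻¹ *ᵥ ((-A) *ᵥ 1)
  have hPyB : ((s + μ) • 1 - A) *ᵥ yB = (-A) *ᵥ 1 :=
    hA.smul_one_sub_mulVec_inv_mulVec hrow hsμ _
  set t := α ⬝ᵥ yB
  have ht : tau A α (s + μ) = t := rfl
  rw [ht] at hchar
  refine ofReal_mem_spectrum_map_of_vecMul_eq_smul (v := demogVec
    (ρJ * t / (s + (ρJ + μJ - φJ))) yB 1 (γR * t / (s + (μ + γR)))) ?_ ?_
  · intro h0
    simpa [demogVec] using congrFun h0 (Sum.inr (Sum.inr (Sum.inl 0)))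
  rw [demogVec_vecMul_Mmat]
  ext (_ | k | _ | _) <;>
    simp only [demogVec, Sum.elim_inl, Sum.elim_inr, Pi.smul_apply, smul_eq_mul]
  · field_simp; ring
  · have hAμ : A - μ • 1 = s • 1 - ((s + μ) • 1 - A) := by module
    simp [hAμ, sub_mulVec, smul_mulVec, hPyB]
  · linear_combination hchar
  · field_simp; ring

theorem exists_nonneg_char_eq (hA : A.IsMetzler) (hrow : ∀ i, ∑ j, A i j ≤ 0) (hα0 : 0 ≤ α)
    (hα1 : ∑ i, α i = 1) (hμ : 0 < μ) (ha : 0 < ρJ + μJ - φJ)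
    (hρJ : 0 ≤ ρJ) (hφV : 0 ≤ φV) (hγR : 0 ≤ γR) (hγV : 0 ≤ γV)
    (h : μ + γV ≤ tau A α μ * (ρJ * φV / (ρJ + μJ - φJ) + γR * γV / (μ + γR))) :
    ∃ s, 0 ≤ s ∧ tau A α (s + μ) *
      (ρJ * φV / (s + (ρJ + μJ - φJ)) + γR * γV / (s + (μ + γR))) = s + (μ + γV) := by
  have hd : 0 < μ + γR := by linarith
  set W := ρJ * φV / (ρJ + μJ - φJ) + γR * γV / (μ + γR)
  set G : ℝ → ℝ := fun s => tau A α (s + μ) *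
    (ρJ * φV / (s + (ρJ + μJ - φJ)) + γR * γV / (s + (μ + γR))) - (s + (μ + γV))
  have hW : 0 ≤ W := by positivity
  have hG0 : 0 ≤ G 0 := by simpa [G] using h
  have hGW : G W ≤ 0 := by
    have hX : ρJ * φV / (W + (ρJ + μJ - φJ)) + γR * γV / (W + (μ + γR)) ≤ W :=
      add_le_add (div_le_div_of_nonneg_left (by positivity) ha (by linarith))
        (div_le_div_of_nonneg_left (by positivity) hd (by linarith))
    have hτ := tau_le_one hA hrow hα0 hα1 (ν := W + μ) (by linarith)
    have hX0 : 0 ≤ ρJ * φV / (W + (ρJ + μJ - φJ)) + γR * γV / (W + (μ + γR)) :=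
      add_nonneg (div_nonneg (mul_nonneg hρJ hφV) (by linarith))
        (div_nonneg (mul_nonneg hγR hγV) (by linarith))
    have hτX := mul_le_of_le_one_left hX0 hτ
    simp only [G]
    linarith
  have hGc : ContinuousOn G (Set.Icc 0 W) := continuousOn_of_forall_continuousAt fun s hs => by
    have hsμ : 0 < s + μ := by linarith [hs.1]
    have hτ : ContinuousAt (fun s => tau A α (s + μ)) s :=
      (continuousAt_tau (hA.det_smul_one_sub_ne_zero hrow hsμ)).comp
        (f := fun s : ℝ => s + μ) (by fun_prop)
    have hsa : s + (ρJ + μJ - φJ) ≠ 0 := by linarith [hs.1]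
    have hsd : s + (μ + γR) ≠ 0 := by linarith [hs.1]
    fun_prop (disch := assumption)
  obtain ⟨s, hs, hGs⟩ := intermediate_value_Icc' hW hGc ⟨hGW, hG0⟩
  exact ⟨s, hs.1, sub_eq_zero.1 hGs⟩

end Model

theorem basicOffspring_lt_one_iff {τ a ρJ φV μ γV γR : ℝ} (hτ1 : τ ≤ 1) (ha : 0 < a)
    (hμ : 0 < μ) (hγV : 0 ≤ γV) (hγR : 0 ≤ γR) :
    ρJ / a * (φV / (μ + γV)) * τ * (1 - τ * (γR / (μ + γR)) * (γV / (μ + γV)))⁻¹ < 1 ↔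
      τ * (ρJ * φV / a + γR * γV / (μ + γR)) < μ + γV := by
  have hc : 0 < μ + γV := by linarith
  have hd : 0 < μ + γR := by linarith
  have hD : 0 < 1 - τ * (γR / (μ + γR)) * (γV / (μ + γV)) := by
    have : τ * (γR * γV) < (μ + γR) * (μ + γV) := by nlinarith [mul_nonneg hγR hγV]
    rw [mul_assoc, div_mul_div_comm, ← mul_div_assoc, sub_pos, div_lt_one (by positivity)]
    exact this
  rw [mul_inv_lt_iff₀ hD, one_mul, ← sub_pos, ← sub_pos (b := τ * _)]
  have : μ + γV - τ * (ρJ * φV / a + γR * γV / (μ + γR)) =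
      (μ + γV) * (1 - τ * (γR / (μ + γR)) * (γV / (μ + γV)) - ρJ / a * (φV / (μ + γV)) * τ) := by
    field_simp
    ring
  rw [this, mul_pos_iff_of_pos_left hc]

theorem extinction_equilibrium_stability_iff_general
    (n : ℕ) (A : Matrix (Fin n) (Fin n) ℝ)
    (hoff : ∀ i j, i ≠ j → 0 ≤ A i j)
    (hrow : ∀ i, ∑ j, A i j ≤ 0)
    (α : Fin n → ℝ) (hα0 : ∀ i, 0 ≤ α i) (hα1 : ∑ i, α i = 1)
    (μ γV γR ρJ μJ φJ φV : ℝ)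
    (hμ : 0 < μ) (hγV : 0 < γV) (hγR : 0 < γR) (hρJ : 0 < ρJ)
    (hφV : 0 ≤ φV) (hφJ' : φJ < ρJ + μJ) :
    (∀ z ∈ spectrum ℂ ((Mmat A α μ γV γR ρJ μJ φJ φV).map (Complex.ofReal ·)), z.re < 0) ↔
      (ρJ / ((ρJ + μJ) - φJ)) * (φV / (μ + γV)) * tau A α μ * nG A α μ γV γR < 1 := by
  have ha : 0 < ρJ + μJ - φJ := sub_pos.2 hφJ'
  rw [nG, basicOffspring_lt_one_iff (tau_le_one hoff hrow hα0 hα1 hμ) ha hμ hγV.le hγR.le]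
  constructor
  · intro hstable
    by_contra! hN
    obtain ⟨s, hs, hchar⟩ := exists_nonneg_char_eq hoff hrow hα0 hα1 hμ ha hρJ.le hφV hγR.le
      hγV.le hN
    have hre := hstable s (ofReal_mem_spectrum_Mmat_of_char_eq hoff hrow (by linarith)
      (by linarith) (by linarith) hchar)
    rw [Complex.ofReal_re] at hre
    linarith
  · intro hN z hz
    obtain ⟨y, hy, hyM⟩ := exists_pos_vecMul_Mmat_neg hoff hrow hα0 hμ ha hρJ.le hγR.le hN
    exact (Mmat_isMetzler hoff hrow hα0 hρJ.le hφV hγV.le hγR.le).re_lt_zero_of_vecMul_neg hy hyM hz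

/-- **Stability of the extinction equilibrium via the linearization.**
If every complex eigenvalue of `A` has negative real part, then every complex
eigenvalue of the Jacobian `M` has negative real part if and only if the basic
offspring number `N₀` is less than one. -/
theorem extinction_equilibrium_stability_iff
    (n : ℕ) (hn : 1 ≤ n) (A : Matrix (Fin n) (Fin n) ℝ)
    (hoff : ∀ i j, i ≠ j → 0 ≤ A i j)
    (hrow : ∀ i, ∑ j, A i j ≤ 0)
    (hA : ∀ z ∈ spectrum ℂ (A.map (Complex.ofReal ·)), z.re < 0)
    (α : Fin n → ℝ) (hα0 : ∀ i, 0 ≤ α i) (hα1 : ∑ i, α i = 1)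
    (μ γV γR ρJ μJ φJ φV : ℝ)
    (hμ : 0 < μ) (hγV : 0 < γV) (hγR : 0 < γR) (hρJ : 0 < ρJ) (hμJ : 0 < μJ)
    (hφJ : 0 ≤ φJ) (hφV : 0 ≤ φV) (hφJ' : φJ < ρJ + μJ) :
    (∀ z ∈ spectrum ℂ ((Mmat A α μ γV γR ρJ μJ φJ φV).map (Complex.ofReal ·)), z.re < 0) ↔
      (ρJ / ((ρJ + μJ) - φJ)) * (φV / (μ + γV)) * tau A α μ * nG A α μ γV γR < 1 :=
  extinction_equilibrium_stability_iff_general n A hoff hrow α hα0 hα1 μ γV γR ρJ μJ φJ φV hμ hγV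
    hγR hρJ hφV hφJ'
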